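/- Let p ≥ 6 be an even integer, n ≥ 2, and let i_1 ≤ i_2 ≤ ⋯ ≤ i_n be colors in C_p. Define δ_p(i_1,…,i_n) as the number of j ∈ C_p such that (i_1,…,i_n,j) has a chain coloring. Let ε ∈ {0,1} be the parity of i_1+⋯+i_n, and set ε(p) = ε if p ≡ 0 (mod 4) and ε(p) = 1−ε if p ≡ 2 (mod 4). Set J_max = min over integers ℓ with 0 ≤ ℓ ≤ n/2 of min((p−4)/2 − ε(p), Σ_{t=1}^{n−2ℓ} i_t − Σ_{s=n−2ℓ+1}^{n} i_s + ℓ(p−4)), and J_min = max over integers k with 0 ≤ k and n−2k−1 ≥ 0 of max(ε, Σ_{s=n−2k}^{n} i_s − Σ_{t=1}^{n−2k−1} i_t − k(p−4)). Then δ_p(i_1,…,i_n) = 1 + (J_max − J_min)/2; in particular δ_p(i_1,…,i_n) ≥ 1. -/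

import Mathlib

/-- Level-`p` colors for even `p`: natural numbers `j` with `j ≤ (p - 4)/2`. -/
def ColorEven (p j : ℕ) : Prop := 2 * j + 4 ≤ p

/-- `p`-admissibility of a triple of colors for even `p`:
`|b - c| ≤ a ≤ b + c`, `a + b + c` even, and `a + b + c ≤ p - 4`. -/
def AdmEven (p a b c : ℕ) : Prop :=
  b ≤ a + c ∧ c ≤ a + b ∧ a ≤ b + c ∧ Even (a + b + c) ∧ a + b + c + 4 ≤ p

/-- `ChainFrom adm C a l e` : starting from the color `a`, the boundary colors `l`
can be connected by the chain of internal colors `e` (each internal color satisfying `C`),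
all consecutive triples being admissible. -/
def ChainFrom (adm : ℕ → ℕ → ℕ → Prop) (C : ℕ → Prop) : ℕ → List ℕ → List ℕ → Prop
  | a, [x, y], [] => adm a x y
  | a, x :: rest, e :: es => C e ∧ adm a x e ∧ ChainFrom adm C e rest es
  | _, _, _ => False

/-- `IsChainColoring adm C i e` : `e = (e_1, …, e_{m-3})` is a chain coloring for the
boundary tuple `i = (i_1, …, i_m)`, i.e. the triples `(i_1,i_2,e_1), (e_1,i_3,e_2), …,
(e_{m-3}, i_{m-1}, i_m)` are all admissible and each `e_t` is a color. -/
def IsChainColoring (adm : ℕ → ℕ → ℕ → Prop) (C : ℕ → Prop) : List ℕ → List ℕ → Prop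
  | i1 :: rest, e => ChainFrom adm C i1 rest e
  | [], _ => False

/-- A chain coloring for the boundary tuple `i` exists. -/
def HasChain (adm : ℕ → ℕ → ℕ → Prop) (C : ℕ → Prop) (i : List ℕ) : Prop :=
  ∃ e, IsChainColoring adm C i e

/-- `δ_p(i)`: the number of colors `j ∈ C_p` such that `(i_1, …, i_n, j)` has a
chain coloring. -/
noncomputable def deltaEven (p : ℕ) (i : List ℕ) : ℕ :=
  {j : ℕ | ColorEven p j ∧ HasChain (AdmEven p) (ColorEven p) (i ++ [j])}.ncard

/-- `ε ∈ {0,1}`, the parity of `∑ i_s`. -/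
def epsI (n : ℕ) (i : Fin n → ℕ) : ℤ := if Even (∑ s, i s) then 0 else 1

/-- `ε(p) = ε` if `p ≡ 0 (mod 4)` and `ε(p) = 1 - ε` if `p ≡ 2 (mod 4)`. -/
def epsP (p n : ℕ) (i : Fin n → ℕ) : ℤ :=
  if p % 4 = 0 then epsI n i else 1 - epsI n i

/-- `J_{p,max}(i) = min_{0 ≤ ℓ ≤ n/2} min ((p-4)/2 - ε(p),
∑_{t=1}^{n-2ℓ} i_t - ∑_{s=n-2ℓ+1}^{n} i_s + ℓ(p-4))`, indices of `i` being `1`-based. -/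
def JmaxEven (p n : ℕ) (i : Fin n → ℕ) : ℤ :=
  (Finset.range (n / 2 + 1)).inf' (Finset.nonempty_range_iff.mpr (Nat.succ_ne_zero _))
    fun l => min (((p : ℤ) - 4) / 2 - epsP p n i)
      ((∑ t ∈ Finset.univ.filter (fun t : Fin n => (t : ℕ) < n - 2 * l), (i t : ℤ))
        - (∑ s ∈ Finset.univ.filter (fun s : Fin n => n - 2 * l ≤ (s : ℕ)), (i s : ℤ))
        + (l : ℤ) * ((p : ℤ) - 4))

/-- `J_{p,min}(i) = max_{0 ≤ k, n-2k-1 ≥ 0} max (ε, ∑_{s=n-2k}^{n} i_s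
- ∑_{t=1}^{n-2k-1} i_t - k(p-4))`, indices of `i` being `1`-based. -/
def JminEven (p n : ℕ) (i : Fin n → ℕ) : ℤ :=
  (Finset.range ((n - 1) / 2 + 1)).sup' (Finset.nonempty_range_iff.mpr (Nat.succ_ne_zero _))
    fun k => max (epsI n i)
      ((∑ s ∈ Finset.univ.filter (fun s : Fin n => n - (2 * k + 1) ≤ (s : ℕ)), (i s : ℤ))
        - (∑ t ∈ Finset.univ.filter (fun t : Fin n => (t : ℕ) < n - (2 * k + 1)), (i t : ℤ))
        - (k : ℤ) * ((p : ℤ) - 4))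

/-!
Read a chain coloring from the left. The colors that can end a chain through `I 0, …, I m` form
a parity interval `{j ≡ I 0 + ⋯ + I m (mod 2) | L ≤ j ≤ U}`, because the colors `j` making
`(e, x, j)` admissible for some `e` in a parity interval `[L, U]` form the parity interval
`[max(ε', L - x, x - U), min(top, U + x, p - 4 - x - L)]`, with `top` the largest color of the
new parity `ε'`. For nondecreasing colors, `J_min` and `J_max` of the prefixes satisfy exactly
this recursion, so `δ_p` counts the integers of the right parity in `[J_min, J_max]`.
-/

theorem AdmEven.colorEven_right {p a b c : ℕ} (h : AdmEven p a b c) : ColorEven p c := by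
  obtain ⟨-, h₂, -, -, h₅⟩ := h
  unfold ColorEven
  omega

theorem Monotone.exists_nat_extension {α : Type*} [Preorder α] {n : ℕ} (hn : 0 < n)
    {i : Fin n → α} (hi : Monotone i) :
    ∃ I : ℕ → α, Monotone I ∧ (∀ t : Fin n, I t = i t) ∧ ∀ t, ∃ s, I t = i s :=
  ⟨fun t => i ⟨min t (n - 1), by omega⟩,
    fun a b hab => hi (by simp only [Fin.mk_le_mk]; omega),
    fun t => congrArg i (Fin.ext (by simp only; omega)), fun _ => ⟨_, rfl⟩⟩

theorem Finset.inf'_min_left {ι α : Type*} [LinearOrder α] {s : Finset ι} (H : s.Nonempty)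
    (a : α) (f : ι → α) : s.inf' H (fun b => min a (f b)) = min a (s.inf' H f) :=
  eq_of_forall_le_iff fun z => by
    simp only [Finset.le_inf'_iff, le_min_iff]
    exact ⟨fun h => ⟨(h _ H.choose_spec).1, fun b hb => (h b hb).2⟩,
      fun h b hb => ⟨h.1, h.2 b hb⟩⟩

theorem Finset.sup'_max_left {ι α : Type*} [LinearOrder α] {s : Finset ι} (H : s.Nonempty)
    (a : α) (f : ι → α) : s.sup' H (fun b => max a (f b)) = max a (s.sup' H f) :=
  Finset.inf'_min_left (α := αᵒᵈ) H a f

namespace ChainColoring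

open Finset

def Reaches (adm : ℕ → ℕ → ℕ → Prop) : ℕ → List ℕ → ℕ → Prop
  | a, [], j => j = a
  | a, x :: xs, j => ∃ e, adm a x e ∧ Reaches adm e xs j

theorem reaches_append_singleton (adm : ℕ → ℕ → ℕ → Prop) (a x j : ℕ) (xs : List ℕ) :
    Reaches adm a (xs ++ [x]) j ↔ ∃ e, Reaches adm a xs e ∧ adm e x j := by
  induction xs generalizing a with
  | nil => simp [Reaches]
  | cons y ys ih =>
    simp only [List.cons_append, Reaches, ih]
    grind

theorem exists_chainFrom_iff_reaches (adm : ℕ → ℕ → ℕ → Prop) (C : ℕ → Prop)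
    (hC : ∀ a x e, adm a x e → C e) (a x j : ℕ) (xs : List ℕ) :
    (∃ es, ChainFrom adm C a (xs ++ [x, j]) es) ↔ ∃ e, Reaches adm a xs e ∧ adm e x j := by
  induction xs generalizing a with
  | nil =>
    refine ⟨fun ⟨es, h⟩ => ⟨a, rfl, ?_⟩, fun ⟨_, rfl, h⟩ => ⟨[], h⟩⟩
    rcases es with _ | ⟨_, _ | _⟩ <;> simp_all [ChainFrom]
  | cons y ys ih =>
    simp only [List.cons_append]
    constructor
    · rintro ⟨_ | ⟨e, es⟩, h⟩
      · rcases ys with _ | ⟨_, _⟩ <;> simp [ChainFrom] at h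
      · rw [ChainFrom] at h
        obtain ⟨-, hy, h⟩ := h
        obtain ⟨e', he', hx⟩ := (ih e).1 ⟨es, h⟩
        exact ⟨e', ⟨e, hy, he'⟩, hx⟩
    · rintro ⟨e', ⟨e, hy, he'⟩, hx⟩
      obtain ⟨es, h⟩ := (ih e).2 ⟨e', he', hx⟩
      exact ⟨e :: es, by rw [ChainFrom]; exact ⟨hC _ _ _ hy, hy, h⟩⟩

theorem colorEven_and_hasChain_iff (p a j : ℕ) {xs : List ℕ} (hxs : xs ≠ []) :
    ColorEven p j ∧ HasChain (AdmEven p) (ColorEven p) (a :: xs ++ [j]) ↔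
      Reaches (AdmEven p) a xs j := by
  rw [← List.dropLast_append_getLast hxs, reaches_append_singleton, HasChain]
  simp only [IsChainColoring, List.cons_append, List.append_assoc, List.nil_append]
  rw [exists_chainFrom_iff_reaches (AdmEven p) (ColorEven p)
    fun _ _ _ => AdmEven.colorEven_right]
  exact ⟨fun h => h.2, fun h => ⟨h.elim fun _ h => AdmEven.colorEven_right h.2, h⟩⟩

def parityIcc (ε L U : ℤ) : Set ℕ := {j | (j : ℤ) % 2 = ε ∧ L ≤ j ∧ j ≤ U}

theorem ncard_parityIcc {ε L U : ℤ} (hL : 0 ≤ L) (hLU : L ≤ U) (hLε : L % 2 = ε)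
    (hUε : U % 2 = ε) : ((parityIcc ε L U).ncard : ℤ) = (U - L) / 2 + 1 := by
  have : parityIcc ε L U =
      (Finset.range (((U - L) / 2).toNat + 1)).image (fun t => L.toNat + 2 * t) := by
    ext j
    simp only [parityIcc, Finset.coe_image, Finset.coe_range, Set.mem_image, Set.mem_Iio,
      Set.mem_ofPred_eq]
    constructor
    · rintro ⟨h1, h2, h3⟩
      exact ⟨(j - L.toNat) / 2, by omega, by omega⟩
    · rintro ⟨t, ht, rfl⟩
      push_cast
      omega
  rw [this, Set.ncard_coe_finset, Finset.card_image_of_injective _ fun a b hab => by omega,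
    Finset.card_range]
  omega

-- the largest color of parity `ε`
def topColor (p : ℕ) (ε : ℤ) : ℤ := ((p : ℤ) - 4) / 2 - (((p : ℤ) - 4) / 2 - ε) % 2

def ParityBounds (p : ℕ) (ε L U : ℤ) : Prop :=
  ε ≤ L ∧ L ≤ U ∧ U ≤ ((p : ℤ) - 4) / 2 ∧ L % 2 = ε ∧ U % 2 = ε

def nextLower (ε L U : ℤ) (x : ℕ) : ℤ := max ((ε + x) % 2) (max (L - x) (x - U))

def nextUpper (p : ℕ) (ε L U : ℤ) (x : ℕ) : ℤ :=
  min (topColor p ((ε + x) % 2)) (min (U + x) ((p : ℤ) - 4 - x - L))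

section

variable {p x : ℕ} {ε L U : ℤ}

theorem setOf_exists_admEven_eq_parityIcc (hp : Even p) (hx : ColorEven p x)
    (h : ParityBounds p ε L U) :
    {j | ∃ e ∈ parityIcc ε L U, AdmEven p e x j} =
      parityIcc ((ε + x) % 2) (nextLower ε L U x) (nextUpper p ε L U x) := by
  obtain ⟨hεL, hLU, hU, hLε, hUε⟩ := h
  unfold ColorEven at hx
  obtain ⟨r, rfl⟩ := hp
  ext j
  simp only [parityIcc, nextLower, nextUpper, topColor, AdmEven, Nat.even_iff,
    Set.mem_ofPred_eq, max_le_iff, le_min_iff]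
  constructor
  · rintro ⟨e, ⟨he, hLe, heU⟩, h1, h2, h3, h4, h5⟩
    omega
  · rintro ⟨hj, ⟨hj1, hj2, hj3⟩, hj4, hj5, hj6⟩
    -- the least `e ≥ L` with `|x - j| ≤ e`
    refine ⟨(max L (max ((x : ℤ) - j) ((j : ℤ) - x))).toNat, ?_, ?_⟩ <;> omega

theorem ParityBounds.next (hp : 6 ≤ p) (hpe : Even p) (hx : ColorEven p x)
    (h : ParityBounds p ε L U) :
    ParityBounds p ((ε + x) % 2) (nextLower ε L U x) (nextUpper p ε L U x) := by
  obtain ⟨hεL, hLU, hU, hLε, hUε⟩ := h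
  unfold ColorEven at hx
  obtain ⟨r, rfl⟩ := hpe
  simp only [ParityBounds, nextLower, nextUpper, topColor]
  omega

end

section ClosedForms

variable (p : ℕ) (I : ℕ → ℕ)

def prefixSum (m : ℕ) : ℤ := ∑ t ∈ range m, (I t : ℤ)

def prefixParity (m : ℕ) : ℤ := prefixSum I m % 2

-- The `l`-th term of `J_max` and the `k`-th term of `J_min` of the prefix `I 0, …, I (m - 1)`,
-- written with prefix sums.
def upperTerm (m l : ℕ) : ℤ := 2 * prefixSum I (m - 2 * l) - prefixSum I m + l * ((p : ℤ) - 4)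

def lowerTerm (m k : ℕ) : ℤ :=
  prefixSum I m - 2 * prefixSum I (m - (2 * k + 1)) - k * ((p : ℤ) - 4)

def upperBound (m : ℕ) : ℤ :=
  min (topColor p (prefixParity I m))
    ((range (m / 2 + 1)).inf' nonempty_range_add_one (upperTerm p I m))

def lowerBound (m : ℕ) : ℤ :=
  max (prefixParity I m)
    ((range ((m - 1) / 2 + 1)).sup' nonempty_range_add_one (lowerTerm p I m))

variable {p I}

theorem prefixSum_zero : prefixSum I 0 = 0 :=
  sum_range_zero _

theorem prefixSum_one : prefixSum I 1 = I 0 :=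
  sum_range_one _

theorem prefixSum_succ (m : ℕ) : prefixSum I (m + 1) = prefixSum I m + I m :=
  sum_range_succ _ _

theorem prefixParity_succ (m : ℕ) :
    prefixParity I (m + 1) = (prefixParity I m + I m) % 2 := by
  simp only [prefixParity, prefixSum_succ, Int.emod_add_emod]

theorem le_upperBound_iff {m : ℕ} {z : ℤ} :
    z ≤ upperBound p I m ↔
      z ≤ topColor p (prefixParity I m) ∧ ∀ l ≤ m / 2, z ≤ upperTerm p I m l := by
  simp [upperBound, Finset.le_inf'_iff]

theorem lowerBound_le_iff {m : ℕ} {z : ℤ} :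
    lowerBound p I m ≤ z ↔
      prefixParity I m ≤ z ∧ ∀ k ≤ (m - 1) / 2, lowerTerm p I m k ≤ z := by
  simp [lowerBound, Finset.sup'_le_iff]

theorem upperTerm_zero (m : ℕ) : upperTerm p I m 0 = prefixSum I m := by
  rw [upperTerm, mul_zero, Nat.sub_zero, Nat.cast_zero, zero_mul]
  ring

theorem upperTerm_succ_le (hI : Monotone I) {m l : ℕ} (hl : 2 * l ≤ m) :
    upperTerm p I (m + 1) l ≤ upperTerm p I m l + I m := by
  have := hI (Nat.sub_le m (2 * l))
  rw [upperTerm, upperTerm, Nat.sub_add_comm hl, prefixSum_succ, prefixSum_succ]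
  omega

theorem upperTerm_succ_succ {m k : ℕ} (hk : 2 * k + 1 ≤ m) :
    upperTerm p I (m + 1) (k + 1) = (p : ℤ) - 4 - I m - lowerTerm p I m k := by
  rw [upperTerm, lowerTerm, show m + 1 - 2 * (k + 1) = m - (2 * k + 1) by omega, prefixSum_succ]
  push_cast
  ring

theorem lowerTerm_succ {m k : ℕ} (hk : 2 * k ≤ m) :
    lowerTerm p I (m + 1) k = I m - upperTerm p I m k := by
  rw [upperTerm, lowerTerm, show m + 1 - (2 * k + 1) = m - 2 * k by omega, prefixSum_succ]
  ring

theorem lowerTerm_sub_le (hI : Monotone I) {m k : ℕ} (hk : 2 * k + 1 ≤ m) :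
    lowerTerm p I m k - I m ≤ lowerTerm p I (m + 1) k := by
  have := hI (Nat.sub_le m (2 * k + 1))
  rw [lowerTerm_succ (by omega), upperTerm, lowerTerm,
    show m - 2 * k = m - (2 * k + 1) + 1 by omega, prefixSum_succ]
  omega

theorem upperBound_succ (hI : Monotone I) {m : ℕ} (hm : 1 ≤ m) (hx : ColorEven p (I m)) :
    upperBound p I (m + 1) =
      nextUpper p (prefixParity I m) (lowerBound p I m) (upperBound p I m) (I m) := by
  refine eq_of_forall_le_iff fun z => ?_
  rw [nextUpper, le_min_iff, le_min_iff, ← sub_le_iff_le_add, le_sub_comm, le_upperBound_iff,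
    le_upperBound_iff, lowerBound_le_iff, prefixParity_succ]
  unfold ColorEven at hx
  constructor
  · rintro ⟨htop, hf⟩
    refine ⟨htop, ⟨?_, fun l hl => ?_⟩, ?_, fun k hk => ?_⟩
    · unfold topColor prefixParity at *
      omega
    · have := upperTerm_succ_le (p := p) hI (show 2 * l ≤ m by omega)
      have := hf l (by omega)
      omega
    · unfold topColor prefixParity at *
      omega
    · have := hf (k + 1) (by omega)
      rw [upperTerm_succ_succ (by omega)] at this
      omega
  · rintro ⟨htop, ⟨-, hf⟩, -, hg⟩
    refine ⟨htop, fun l hl => ?_⟩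
    rcases l with _ | k
    · have := hf 0 (Nat.zero_le _)
      rw [upperTerm_zero] at this ⊢
      rw [prefixSum_succ]
      omega
    · have := hg k (by omega)
      rw [upperTerm_succ_succ (by omega)]
      omega

theorem lowerBound_succ (hI : Monotone I) {m : ℕ} (hm : 1 ≤ m) (hx : ColorEven p (I m)) :
    lowerBound p I (m + 1) =
      nextLower (prefixParity I m) (lowerBound p I m) (upperBound p I m) (I m) := by
  refine eq_of_forall_ge_iff fun z => ?_
  rw [nextLower, max_le_iff, max_le_iff, sub_le_iff_le_add, sub_le_comm, lowerBound_le_iff,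
    lowerBound_le_iff, le_upperBound_iff, prefixParity_succ, Nat.add_sub_cancel]
  unfold ColorEven at hx
  constructor
  · rintro ⟨hε, hg⟩
    refine ⟨hε, ⟨?_, fun k hk => ?_⟩, ?_, fun l hl => ?_⟩
    · unfold prefixParity at *
      omega
    · have := lowerTerm_sub_le (p := p) hI (show 2 * k + 1 ≤ m by omega)
      have := hg k (by omega)
      omega
    · unfold topColor prefixParity at *
      omega
    · have := hg l hl
      rw [lowerTerm_succ (by omega)] at this
      omega
  · rintro ⟨hε, -, -, hf⟩
    refine ⟨hε, fun k hk => ?_⟩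
    have := hf k hk
    rw [lowerTerm_succ (by omega)]
    omega

theorem upperBound_one (h : ColorEven p (I 0)) : upperBound p I 1 = I 0 := by
  simp only [upperBound, Nat.reduceDiv, zero_add, range_one, inf'_singleton, upperTerm_zero,
    prefixParity, prefixSum_one]
  unfold ColorEven topColor at *
  omega

theorem lowerBound_one : lowerBound p I 1 = I 0 := by
  simp only [lowerBound, Nat.sub_self, Nat.zero_div, zero_add, range_one, sup'_singleton,
    lowerTerm, prefixParity, prefixSum_one, prefixSum_zero]
  omega

theorem parityBounds_lowerBound_upperBound (hp : 6 ≤ p) (hpe : Even p) (hI : Monotone I)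
    (hcol : ∀ t, ColorEven p (I t)) {m : ℕ} (hm : 1 ≤ m) :
    ParityBounds p (prefixParity I m) (lowerBound p I m) (upperBound p I m) := by
  induction m, hm using Nat.le_induction with
  | base =>
    have := hcol 0
    unfold ColorEven at this
    rw [ParityBounds, upperBound_one (hcol 0), lowerBound_one, prefixParity, prefixSum_one]
    omega
  | succ m hm ih =>
    rw [upperBound_succ hI hm (hcol m), lowerBound_succ hI hm (hcol m), prefixParity_succ]
    exact ih.next hp hpe (hcol m)

theorem setOf_reaches_eq_parityIcc (hp : 6 ≤ p) (hpe : Even p) (hI : Monotone I)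
    (hcol : ∀ t, ColorEven p (I t)) (m : ℕ) :
    {j | Reaches (AdmEven p) (I 0) ((List.range m).map (fun t => I (t + 1))) j} =
      parityIcc (prefixParity I (m + 1)) (lowerBound p I (m + 1)) (upperBound p I (m + 1)) := by
  induction m with
  | zero =>
    ext j
    simp only [List.range_zero, List.map_nil, Reaches, parityIcc, zero_add, prefixParity,
      prefixSum_one, upperBound_one (hcol 0), lowerBound_one, Set.mem_ofPred_eq]
    omega
  | succ m ih =>
    have hb := parityBounds_lowerBound_upperBound hp hpe hI hcol (Nat.le_add_left 1 m)
    simp only [List.range_succ, List.map_append, List.map_cons, List.map_nil,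
      reaches_append_singleton]
    rw [upperBound_succ hI (Nat.le_add_left 1 m) (hcol _),
      lowerBound_succ hI (Nat.le_add_left 1 m) (hcol _), prefixParity_succ,
      ← setOf_exists_admEven_eq_parityIcc hpe (hcol _) hb, ← ih]
    rfl

theorem setOf_colorEven_hasChain_eq_parityIcc (hp : 6 ≤ p) (hpe : Even p) (hI : Monotone I)
    (hcol : ∀ t, ColorEven p (I t)) {n : ℕ} (hn : 2 ≤ n) :
    {j | ColorEven p j ∧ HasChain (AdmEven p) (ColorEven p) ((List.range n).map I ++ [j])} =
      parityIcc (prefixParity I n) (lowerBound p I n) (upperBound p I n) := by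
  obtain ⟨m, rfl⟩ := Nat.exists_eq_add_of_le' hn
  rw [← setOf_reaches_eq_parityIcc hp hpe hI hcol]
  ext j
  rw [List.range_succ_eq_map, List.map_cons, List.map_map]
  exact colorEven_and_hasChain_iff p _ j (by simp)

end ClosedForms

section Glue

variable {p n : ℕ} {i : Fin n → ℕ} {I : ℕ → ℕ}

theorem sum_filter_fin_eq_sum_filter_range (hI : ∀ t : Fin n, I t = i t) (P : ℕ → Prop)
    [DecidablePred P] :
    ∑ t ∈ univ.filter (fun t : Fin n => P t), (i t : ℤ) =
      ∑ t ∈ (range n).filter P, (I t : ℤ) := by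
  simp_rw [sum_filter, ← hI]
  exact Fin.sum_univ_eq_sum_range (fun t => if P t then (I t : ℤ) else 0) n

theorem sum_filter_lt_eq_prefixSum (hI : ∀ t : Fin n, I t = i t) {c : ℕ} (hc : c ≤ n) :
    ∑ t ∈ univ.filter (fun t : Fin n => (t : ℕ) < c), (i t : ℤ) = prefixSum I c := by
  rw [sum_filter_fin_eq_sum_filter_range hI (· < c), prefixSum]
  congr 1
  ext t
  simp only [mem_filter, mem_range]
  omega

theorem sum_filter_ge_eq_sub_prefixSum (hI : ∀ t : Fin n, I t = i t) {c : ℕ} (hc : c ≤ n) :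
    ∑ t ∈ univ.filter (fun t : Fin n => c ≤ (t : ℕ)), (i t : ℤ) =
      prefixSum I n - prefixSum I c := by
  rw [sum_filter_fin_eq_sum_filter_range hI (c ≤ ·), prefixSum, prefixSum,
    ← sum_Ico_eq_sub _ hc]
  congr 1
  ext t
  simp only [mem_filter, mem_range, mem_Ico]
  omega

theorem epsI_eq_prefixParity (hI : ∀ t : Fin n, I t = i t) :
    epsI n i = prefixParity I n := by
  have hsum : ((∑ s, i s : ℕ) : ℤ) = prefixSum I n := by
    simpa using sum_filter_lt_eq_prefixSum hI le_rfl
  rw [epsI, prefixParity, ← hsum]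
  split_ifs with h <;> [rw [Nat.even_iff] at h; rw [Nat.not_even_iff] at h] <;> omega

theorem JmaxEven_eq_upperBound (hpe : Even p) (hI : ∀ t : Fin n, I t = i t) :
    JmaxEven p n i = upperBound p I n := by
  have htop : ((p : ℤ) - 4) / 2 - epsP p n i = topColor p (prefixParity I n) := by
    obtain ⟨r, rfl⟩ := hpe
    have := Int.emod_two_eq_zero_or_one (prefixSum I n)
    rw [epsP, epsI_eq_prefixParity hI, topColor, prefixParity]
    split_ifs <;> omega
  rw [JmaxEven, upperBound, ← inf'_min_left]
  refine inf'_congr _ rfl fun l _ => ?_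
  rw [htop, sum_filter_lt_eq_prefixSum hI (Nat.sub_le _ _),
    sum_filter_ge_eq_sub_prefixSum hI (Nat.sub_le _ _), upperTerm]
  congr 1
  ring

theorem JminEven_eq_lowerBound (hI : ∀ t : Fin n, I t = i t) :
    JminEven p n i = lowerBound p I n := by
  rw [JminEven, lowerBound, ← sup'_max_left]
  refine sup'_congr _ rfl fun k _ => ?_
  rw [epsI_eq_prefixParity hI, sum_filter_lt_eq_prefixSum hI (Nat.sub_le _ _),
    sum_filter_ge_eq_sub_prefixSum hI (Nat.sub_le _ _), lowerTerm]
  congr 1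
  ring

end Glue

end ChainColoring

open ChainColoring

/-- for even `p ≥ 6`, `n ≥ 2` and nondecreasing colors `i_1 ≤ ⋯ ≤ i_n` in `C_p`,
`δ_p(i_1,…,i_n) = 1 + (J_max - J_min)/2`; in particular `δ_p(i_1,…,i_n) ≥ 1`. -/
theorem stmt5 (p : ℕ) (hp : 6 ≤ p) (heven : Even p) (n : ℕ) (hn : 2 ≤ n)
    (i : Fin n → ℕ) (hi : ∀ s, ColorEven p (i s)) (hmono : Monotone i) :
    (deltaEven p (List.ofFn i) : ℤ)
        = 1 + (JmaxEven p n i - JminEven p n i) / 2 ∧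
      1 ≤ deltaEven p (List.ofFn i) := by
  obtain ⟨I, hImono, hIi, hIrange⟩ := hmono.exists_nat_extension (by omega : 0 < n)
  have hIcol : ∀ t, ColorEven p (I t) := fun t => (hIrange t).elim fun s hs => hs ▸ hi s
  have hofFn : List.ofFn i = (List.range n).map I :=
    List.ext_getElem (by simp) fun k _ _ => by simp [← hIi]
  obtain ⟨hεL, hLU, -, hLε, hUε⟩ :=
    parityBounds_lowerBound_upperBound hp heven hImono hIcol (by omega : 1 ≤ n)
  have hδ : (deltaEven p (List.ofFn i) : ℤ) = (upperBound p I n - lowerBound p I n) / 2 + 1 := by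
    rw [deltaEven, hofFn, setOf_colorEven_hasChain_eq_parityIcc hp heven hImono hIcol hn]
    exact ncard_parityIcc (by unfold prefixParity at hεL; omega) hLU hLε hUε
  rw [JmaxEven_eq_upperBound heven hIi, JminEven_eq_lowerBound hIi]
  omega
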